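/- Let λ₁ ≥ … ≥ λ_p ≥ 0, and let b ∈ ℝ^p be a nonnegative vector with b_j > b_l for some indices j, l ∈ {1,…,p}. For 0 < ε ≤ (b_j − b_l)/2, define b_ε ∈ ℝ^p by (b_ε)_l = b_l + ε, (b_ε)_j = b_j − ε, and (b_ε)_i = b_i for i ∉ {j, l}. Then J_λ(b_ε) ≤ J_λ(b). -/

import Mathlib

/-- The nonincreasing rearrangement of the absolute values of the coordinates of `b`. -/
noncomputable def sortedAbs {p : ℕ} (b : Fin p → ℝ) : Fin p → ℝ :=
  fun i => |b (Tuple.sort (fun j => |b j|) (Fin.rev i))|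

/-- The sorted ℓ₁ norm `J_λ(b) = Σ_i λ_i |b|_{(i)}`. -/
noncomputable def Jlam {p : ℕ} (lam b : Fin p → ℝ) : ℝ :=
  ∑ i, lam i * sortedAbs b i

/-!
For `λ` antitone, the rearrangement inequality exhibits `J_λ(b)` as the largest of the sums
`Σ λᵢ |b_{σ i}|` over all permutations `σ`. Hence `J_λ` is invariant under permuting coordinates
and, when `λ ≥ 0`, convex. With `t = ε / (b_j - b_l) ∈ [0, 1]`, the vector `b_ε` is the convex
combination `(1 - t) b + t b'` where `b'` is `b` with `b_j` and `b_l` swapped, so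
`J_λ(b_ε) ≤ (1 - t) J_λ(b) + t J_λ(b') = J_λ(b)`.
-/

open Finset

noncomputable def sortPerm {p : ℕ} (b : Fin p → ℝ) : Equiv.Perm (Fin p) :=
  Fin.revPerm.trans (Tuple.sort fun j => |b j|)

section SortedL1

variable {p : ℕ} {lam : Fin p → ℝ}

theorem sortedAbs_apply (b : Fin p → ℝ) (i : Fin p) :
    sortedAbs b i = |b (sortPerm b i)| := rfl

theorem Jlam_eq_sum_sortPerm (lam b : Fin p → ℝ) :
    Jlam lam b = ∑ i, lam i * |b (sortPerm b i)| := rfl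

theorem sortedAbs_antitone (b : Fin p → ℝ) : Antitone (sortedAbs b) := fun _ _ hik =>
  Tuple.monotone_sort (fun j => |b j|) (Fin.rev_le_rev.mpr hik)

theorem sum_mul_abs_comp_perm_le_Jlam (hlam : Antitone lam) (b : Fin p → ℝ)
    (σ : Equiv.Perm (Fin p)) : ∑ i, lam i * |b (σ i)| ≤ Jlam lam b := by
  have hσ : ∀ i, sortedAbs b ((σ.trans (sortPerm b).symm) i) = |b (σ i)| := fun i => by
    simp [sortedAbs_apply]
  simpa only [hσ, Jlam] using
    (hlam.monovary (sortedAbs_antitone b)).sum_mul_comp_perm_le_sum_mul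
      (σ := σ.trans (sortPerm b).symm)

theorem Jlam_comp_perm (hlam : Antitone lam) (b : Fin p → ℝ) (π : Equiv.Perm (Fin p)) :
    Jlam lam (b ∘ π) = Jlam lam b := by
  apply le_antisymm
  · exact sum_mul_abs_comp_perm_le_Jlam hlam b ((sortPerm (b ∘ π)).trans π)
  · simpa [← Jlam_eq_sum_sortPerm] using
      sum_mul_abs_comp_perm_le_Jlam hlam (b ∘ π) ((sortPerm b).trans π.symm)

theorem convexOn_Jlam (hlam : Antitone lam) (hlam_nonneg : ∀ i, 0 ≤ lam i) :
    ConvexOn ℝ Set.univ (Jlam lam) := by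
  refine ⟨convex_univ, fun x _ y _ s t hs ht hst => ?_⟩
  set σ := sortPerm (s • x + t • y)
  have hpointwise : ∀ i, lam i * |(s • x + t • y) (σ i)|
      ≤ s * (lam i * |x (σ i)|) + t * (lam i * |y (σ i)|) := fun i => by
    have hz : |s * x (σ i) + t * y (σ i)| ≤ s * |x (σ i)| + t * |y (σ i)| := by
      calc _ ≤ |s * x (σ i)| + |t * y (σ i)| := abs_add_le _ _
        _ = s * |x (σ i)| + t * |y (σ i)| := by
          rw [abs_mul, abs_mul, abs_of_nonneg hs, abs_of_nonneg ht]
    simpa [mul_add, mul_left_comm] using mul_le_mul_of_nonneg_left hz (hlam_nonneg i)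
  calc Jlam lam (s • x + t • y) = ∑ i, lam i * |(s • x + t • y) (σ i)| :=
        Jlam_eq_sum_sortPerm lam _
    _ ≤ ∑ i, (s * (lam i * |x (σ i)|) + t * (lam i * |y (σ i)|)) :=
      sum_le_sum fun i _ => hpointwise i
    _ = s * ∑ i, lam i * |x (σ i)| + t * ∑ i, lam i * |y (σ i)| := by
      rw [sum_add_distrib, mul_sum, mul_sum]
    _ ≤ s • Jlam lam x + t • Jlam lam y := by
      simp only [smul_eq_mul]
      gcongr
      · exact sum_mul_abs_comp_perm_le_Jlam hlam x σ
      · exact sum_mul_abs_comp_perm_le_Jlam hlam y σ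

end SortedL1

theorem transfer_eq_convexCombination_swap {ι : Type*} [DecidableEq ι] (b : ι → ℝ) {j l : ι}
    (hjl : b l ≠ b j) (ε : ℝ) :
    (fun i => if i = l then b l + ε else if i = j then b j - ε else b i)
      = (1 - ε / (b j - b l)) • b + (ε / (b j - b l)) • (b ∘ Equiv.swap j l) := by
  have hd : b j - b l ≠ 0 := sub_ne_zero.2 hjl.symm
  have hne : j ≠ l := fun h => hjl (h ▸ rfl)
  funext i
  by_cases hil : i = l
  · subst hil
    simp
    field_simp
    ring
  by_cases hij : i = j
  · subst hij
    simp [hne]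
    field_simp
    ring
  simp [hil, hij, Equiv.swap_apply_of_ne_of_ne hij hil]
  ring

theorem Jlam_transfer_general {p : ℕ} (lam : Fin p → ℝ)
    (hlam_anti : ∀ i j : Fin p, i ≤ j → lam j ≤ lam i)
    (hlam_nonneg : ∀ i, 0 ≤ lam i)
    (b : Fin p → ℝ)
    (j l : Fin p) (hjl : b l < b j)
    (ε : ℝ) (hε : 0 < ε) (hε' : ε ≤ (b j - b l) / 2) :
    Jlam lam (fun i => if i = l then b l + ε else if i = j then b j - ε else b i)
      ≤ Jlam lam b := by
  have hlam : Antitone lam := fun i k hik => hlam_anti i k hik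
  have hd : 0 < b j - b l := sub_pos.2 hjl
  set t := ε / (b j - b l)
  have ht0 : 0 ≤ t := div_nonneg hε.le hd.le
  have ht1 : t ≤ 1 := (div_le_one hd).2 (by linarith)
  rw [transfer_eq_convexCombination_swap b hjl.ne ε]
  calc Jlam lam ((1 - t) • b + t • (b ∘ Equiv.swap j l))
      ≤ (1 - t) • Jlam lam b + t • Jlam lam (b ∘ Equiv.swap j l) :=
        (convexOn_Jlam hlam hlam_nonneg).2 trivial trivial (by linarith) ht0 (by ring)
    _ = Jlam lam b := by
      rw [Jlam_comp_perm hlam, smul_eq_mul, smul_eq_mul]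
      ring

/-- Transferring mass `ε` from a larger coordinate `b_j` to a smaller coordinate `b_l`
of a nonnegative vector does not increase the sorted ℓ₁ norm. -/
theorem Jlam_transfer {p : ℕ} (lam : Fin p → ℝ)
    (hlam_anti : ∀ i j : Fin p, i ≤ j → lam j ≤ lam i)
    (hlam_nonneg : ∀ i, 0 ≤ lam i)
    (b : Fin p → ℝ) (hb : ∀ i, 0 ≤ b i)
    (j l : Fin p) (hjl : b l < b j)
    (ε : ℝ) (hε : 0 < ε) (hε' : ε ≤ (b j - b l) / 2) :
    Jlam lam (fun i => if i = l then b l + ε else if i = j then b j - ε else b i)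
      ≤ Jlam lam b :=
  Jlam_transfer_general lam hlam_anti hlam_nonneg b j l hjl ε hε hε'
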